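/- arXiv:2405.16338 — 2 statements merged into one kernel-verified Lean document; each statement's English description precedes it below -/
import Mathlib

section
/- Let 𝔹 be the Boolean semifield and let I ⊆ 𝔹[x_0,…,x_n] be the (ordinary, semiring) ideal generated by a homogeneous binomial f = f_1 + f_2 (f_1, f_2 distinct monomials of the same degree). For each degree d, let P_d be the finest partition of the set of degree-d monomials such that h·f_1 and h·f_2 lie in the same part for every monomial h of degree d − deg f. Then the tropical orthogonal dual (I_d)^⊥ ⊆ 𝔹^{Δ^n_d} equals the submodule spanned by the indicator vectors Σ_{m ∈ U} m of the parts U of P_d. -/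
/-! STATEMENT 11: Let `I ⊆ 𝔹[x_0,…,x_n]` be the semiring ideal generated by a
homogeneous binomial `f = f_1 + f_2` of degree `e` (distinct monomials `f_1`,
`f_2`, modeled as multisets of size `e`).  For each degree `d ≥ e`, let `P_d`
be the finest partition of the degree-`d` monomials with `h·f_1 ∼ h·f_2` for
every monomial `h` of degree `d - e` (its parts are the classes of the
equivalence relation generated by these pairs).  Then the tropical orthogonal
dual `(I_d)^⊥ ⊆ 𝔹^{Δ^n_d}` equals the submodule spanned by the indicator
vectors of the parts of `P_d`.  Over `𝔹`, two vectors are tropically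
orthogonal iff their supports meet in a set of size ≠ 1. -/

open scoped Classical

noncomputable section

/-- A submodule of `𝔹^ι`: contains `0` and is closed under pointwise `or`. -/
def IsSubmodB {ι : Type*} (M : Set (ι → Bool)) : Prop :=
  (fun _ => false) ∈ M ∧ ∀ v ∈ M, ∀ w ∈ M, (fun i => v i || w i) ∈ M

/-- The submodule of `𝔹^ι` generated by a set of vectors. -/
def spanB {ι : Type*} (G : Set (ι → Bool)) : Set (ι → Bool) :=
  ⋂₀ {M | IsSubmodB M ∧ G ⊆ M}

/-- Tropical orthogonality over `𝔹`: the supports meet in a set of size ≠ 1. -/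
def TropOrthB {ι : Type*} [Fintype ι] (v w : ι → Bool) : Prop :=
  (Finset.univ.filter fun Y => v Y = true ∧ w Y = true).card ≠ 1

theorem spanB_isSubmodB {ι : Type*} (G : Set (ι → Bool)) : IsSubmodB (spanB G) := by
  constructor
  · intro M hM; exact hM.1.1
  · intro v hv w hw M hM
    exact hM.1.2 v (hv M hM) w (hw M hM)

theorem subset_spanB {ι : Type*} (G : Set (ι → Bool)) : G ⊆ spanB G := by
  intro g hg M hM; exact hM.2 hg

theorem spanB_le {ι : Type*} {G M : Set (ι → Bool)} (h1 : IsSubmodB M) (h2 : G ⊆ M) :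
    spanB G ⊆ M := fun _ hx => hx M ⟨h1, h2⟩

theorem sup_ex_spanB {ι : Type*} [DecidableEq ι] (C : Set (ι → Bool))
    (F : ι → (ι → Bool)) (hF : ∀ a, F a ∈ spanB C) (s : Finset ι) :
    ∃ u ∈ spanB C, ∀ Y, u Y = true ↔ ∃ w₀ ∈ s, F w₀ Y = true := by
  classical
  induction s using Finset.induction_on with
  | empty => exact ⟨fun _ => false, (spanB_isSubmodB C).1, by simp⟩
  | @insert a s ha ih =>
      obtain ⟨u, huC, hiff⟩ := ih
      refine ⟨fun Y => F a Y || u Y, (spanB_isSubmodB C).2 _ (hF a) _ huC, ?_⟩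
      intro Y
      simp [Bool.or_eq_true, hiff Y, Finset.mem_insert, exists_eq_or_imp]

theorem binomial_ideal_tropical_dual
    {n e d : ℕ} (hed : e ≤ d)
    (f₁ f₂ : Multiset (Fin (n + 1)))
    (hf₁ : Multiset.card f₁ = e) (hf₂ : Multiset.card f₂ = e) (hne : f₁ ≠ f₂) :
    {v : Sym (Fin (n + 1)) d → Bool |
        ∀ u ∈ spanB {g | ∃ h : Sym (Fin (n + 1)) (d - e),
          g = fun Y : Sym (Fin (n + 1)) d =>
            decide (Y.toMultiset = h.toMultiset + f₁ ∨
                    Y.toMultiset = h.toMultiset + f₂)},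
          TropOrthB v u} =
      spanB {g | ∃ w₀ : Sym (Fin (n + 1)) d,
        g = fun Y => decide (Relation.EqvGen
          (fun a b : Sym (Fin (n + 1)) d => ∃ h : Sym (Fin (n + 1)) (d - e),
            a.toMultiset = h.toMultiset + f₁ ∧ b.toMultiset = h.toMultiset + f₂)
          w₀ Y)} := by
  classical
  set R : Sym (Fin (n + 1)) d → Sym (Fin (n + 1)) d → Prop :=
    fun a b => ∃ h : Sym (Fin (n + 1)) (d - e),
      a.toMultiset = h.toMultiset + f₁ ∧ b.toMultiset = h.toMultiset + f₂ with hRdef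
  have hcard : ∀ (h : Sym (Fin (n + 1)) (d - e)) (f : Multiset (Fin (n + 1))),
      Multiset.card f = e → Multiset.card (h.toMultiset + f) = d := by
    intro h f hf
    rw [Multiset.card_add, Sym.card_coe, hf, Nat.sub_add_cancel hed]
  -- the two endpoints of the generator indexed by h
  let Y₁ : Sym (Fin (n + 1)) (d - e) → Sym (Fin (n + 1)) d :=
    fun h => Sym.mk (h.toMultiset + f₁) (hcard h f₁ hf₁)
  let Y₂ : Sym (Fin (n + 1)) (d - e) → Sym (Fin (n + 1)) d :=
    fun h => Sym.mk (h.toMultiset + f₂) (hcard h f₂ hf₂)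
  have hY₁ : ∀ h, (Y₁ h).toMultiset = h.toMultiset + f₁ := fun h => rfl
  have hY₂ : ∀ h, (Y₂ h).toMultiset = h.toMultiset + f₂ := fun h => rfl
  have hY12 : ∀ h, Y₁ h ≠ Y₂ h := by
    intro h heq
    apply hne
    have := congrArg Sym.toMultiset heq
    rw [hY₁, hY₂] at this
    exact add_left_cancel this
  have hRY : ∀ h, R (Y₁ h) (Y₂ h) := fun h => ⟨h, hY₁ h, hY₂ h⟩
  set G : Set (Sym (Fin (n + 1)) d → Bool) :=
    {g | ∃ h : Sym (Fin (n + 1)) (d - e),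
      g = fun Y : Sym (Fin (n + 1)) d =>
        decide (Y.toMultiset = h.toMultiset + f₁ ∨
                Y.toMultiset = h.toMultiset + f₂)} with hGdef
  set C : Set (Sym (Fin (n + 1)) d → Bool) :=
    {g | ∃ w₀ : Sym (Fin (n + 1)) d,
      g = fun Y => decide (Relation.EqvGen R w₀ Y)} with hCdef
  -- key fact 1: if v is constant on the generator pairs, it is orthogonal to spanB G
  have orth_of_pairs : ∀ v : Sym (Fin (n + 1)) d → Bool,
      (∀ h, v (Y₁ h) = v (Y₂ h)) → ∀ u ∈ spanB G, TropOrthB v u := by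
    intro v hv u hu
    -- the submodule M of vectors whose support is covered by pairs inside the support
    set M : Set (Sym (Fin (n + 1)) d → Bool) :=
      {u | ∀ Y, u Y = true → ∃ h, (Y = Y₁ h ∨ Y = Y₂ h) ∧
        u (Y₁ h) = true ∧ u (Y₂ h) = true} with hMdef
    have hM : IsSubmodB M := by
      constructor
      · intro Y hY; exact absurd hY (by simp)
      · intro a ha b hb Y hY
        rcases Bool.or_eq_true_iff.mp hY with h1 | h1
        · obtain ⟨h, hor, hu1, hu2⟩ := ha Y h1
          exact ⟨h, hor, by simp [hu1], by simp [hu2]⟩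
        · obtain ⟨h, hor, hu1, hu2⟩ := hb Y h1
          exact ⟨h, hor, by simp [hu1], by simp [hu2]⟩
    have hGM : G ⊆ M := by
      rintro g ⟨h, rfl⟩ Y hY
      rw [decide_eq_true_iff] at hY
      refine ⟨h, ?_, ?_, ?_⟩
      · rcases hY with hY | hY
        · exact Or.inl (Sym.coe_injective (by rw [hY, hY₁]))
        · exact Or.inr (Sym.coe_injective (by rw [hY, hY₂]))
      · exact decide_eq_true (Or.inl (hY₁ h))
      · exact decide_eq_true (Or.inr (hY₂ h))
    have huM : u ∈ M := spanB_le hM hGM hu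
    intro hcard1
    obtain ⟨Y, hYf⟩ := Finset.card_eq_one.mp hcard1
    have hYmem : Y ∈ Finset.univ.filter fun Z => v Z = true ∧ u Z = true := by
      rw [hYf]; exact Finset.mem_singleton_self Y
    rw [Finset.mem_filter] at hYmem
    obtain ⟨h, hor, hu1, hu2⟩ := huM Y hYmem.2.2
    have hvv : v (Y₁ h) = v (Y₂ h) := hv h
    have hv1 : v (Y₁ h) = true := by
      rcases hor with hor | hor
      · rw [← hor]; exact hYmem.2.1
      · rw [hvv, ← hor]; exact hYmem.2.1
    have hv2 : v (Y₂ h) = true := by rw [← hvv]; exact hv1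
    have m1 : Y₁ h ∈ ({Y} : Finset _) := by
      rw [← hYf, Finset.mem_filter]; exact ⟨Finset.mem_univ _, hv1, hu1⟩
    have m2 : Y₂ h ∈ ({Y} : Finset _) := by
      rw [← hYf, Finset.mem_filter]; exact ⟨Finset.mem_univ _, hv2, hu2⟩
    rw [Finset.mem_singleton] at m1 m2
    exact hY12 h (m1.trans m2.symm)
  ext v
  simp only [Set.mem_setOf_eq]
  constructor
  · -- dual ⊆ span of class indicators
    intro hv
    have pairs : ∀ h, v (Y₁ h) = v (Y₂ h) := by
      intro h
      by_contra hvv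
      have horth := hv _ (subset_spanB G ⟨h, rfl⟩)
      apply horth
      rw [Finset.card_eq_one]
      have key : ∀ Z : Sym (Fin (n + 1)) d,
          (decide (Z.toMultiset = h.toMultiset + f₁ ∨
            Z.toMultiset = h.toMultiset + f₂) = true) ↔ (Z = Y₁ h ∨ Z = Y₂ h) := by
        intro Z
        rw [decide_eq_true_iff]
        constructor
        · rintro (hZ | hZ)
          · exact Or.inl (Sym.coe_injective (by rw [hZ, hY₁]))
          · exact Or.inr (Sym.coe_injective (by rw [hZ, hY₂]))
        · rintro (rfl | rfl)
          · exact Or.inl (hY₁ h)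
          · exact Or.inr (hY₂ h)
      cases hb1 : v (Y₁ h) <;> cases hb2 : v (Y₂ h)
      · exact absurd (hb1.trans hb2.symm) hvv
      · refine ⟨Y₂ h, Finset.ext fun Z => ?_⟩
        rw [Finset.mem_filter, Finset.mem_singleton]
        constructor
        · rintro ⟨-, hvZ, huZ⟩
          rcases (key Z).mp huZ with rfl | rfl
          · exact absurd (hb1 ▸ hvZ) (by simp)
          · rfl
        · rintro rfl
          exact ⟨Finset.mem_univ _, hb2, (key _).mpr (Or.inr rfl)⟩
      · refine ⟨Y₁ h, Finset.ext fun Z => ?_⟩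
        rw [Finset.mem_filter, Finset.mem_singleton]
        constructor
        · rintro ⟨-, hvZ, huZ⟩
          rcases (key Z).mp huZ with rfl | rfl
          · rfl
          · exact absurd (hb2 ▸ hvZ) (by simp)
        · rintro rfl
          exact ⟨Finset.mem_univ _, hb1, (key _).mpr (Or.inl rfl)⟩
      · exact absurd (hb1.trans hb2.symm) hvv
    have Hv : ∀ a b, R a b → v a = v b := by
      rintro a b ⟨h, ha, hb⟩
      have ha' : a = Y₁ h := Sym.coe_injective (by rw [ha, hY₁])
      have hb' : b = Y₂ h := Sym.coe_injective (by rw [hb, hY₂])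
      rw [ha', hb']; exact pairs h
    have HvE : ∀ a b, Relation.EqvGen R a b → v a = v b := by
      intro a b hab
      induction hab with
      | rel _ _ h => exact Hv _ _ h
      | refl => rfl
      | symm _ _ _ ih => exact ih.symm
      | trans _ _ _ _ _ ih1 ih2 => exact ih1.trans ih2
    obtain ⟨u, huC, hiff⟩ := sup_ex_spanB C
      (fun w₀ => fun Z => decide (Relation.EqvGen R w₀ Z))
      (fun a => subset_spanB C ⟨a, rfl⟩)
      (Finset.univ.filter (fun w => v w = true))
    have hvu : v = u := by
      funext Y
      cases hY : v Y
      · cases huY : u Y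
        · rfl
        · exfalso
          obtain ⟨w₀, hw₀, hE⟩ := (hiff Y).mp huY
          rw [Finset.mem_filter] at hw₀
          rw [decide_eq_true_iff] at hE
          rw [← HvE _ _ hE, hw₀.2] at hY
          exact absurd hY (by simp)
      · symm
        exact (hiff Y).mpr ⟨Y, Finset.mem_filter.mpr ⟨Finset.mem_univ _, hY⟩,
          decide_eq_true (Relation.EqvGen.refl Y)⟩
    rw [hvu]
    exact huC
  · -- span of class indicators ⊆ dual
    intro hv u hu
    apply orth_of_pairs v ?_ u hu
    have hCM : spanB C ⊆ {w : Sym (Fin (n + 1)) d → Bool | ∀ h, w (Y₁ h) = w (Y₂ h)} := by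
      apply spanB_le
      · constructor
        · intro h; rfl
        · intro a ha b hb h
          simp only [Set.mem_setOf_eq] at ha hb
          simp only [ha h, hb h]
      · rintro g ⟨w₀, rfl⟩ h
        apply decide_eq_decide.mpr
        constructor
        · intro h1; exact Relation.EqvGen.trans _ _ _ h1 (Relation.EqvGen.rel _ _ (hRY h))
        · intro h1; exact Relation.EqvGen.trans _ _ _ h1 (Relation.EqvGen.symm _ _ (Relation.EqvGen.rel _ _ (hRY h)))
    exact hCM hv

end
end

section
/- Let S be a totally ordered idempotent semifield and f ∈ S[x_0,…,x_n] homogeneous of degree e. For each d ≥ e, let [f]_d ⊆ S^{Δ^n_d} be the stable sum of the rows of the Macaulay matrix D_d(f) (a tropical linear space of rank C(n+d−e, d−e)). Then multiplication by any variable x_i maps [f]_d into [f]_{d+1}; consequently the graded module [f] = ⊕_d [f]_d is a homogeneous ideal of S[x_0,…,x_n] each of whose graded pieces is a tropical linear space (a tropical ideal). -/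
/-! Over an idempotent semifield the tropical maximal minors of any matrix satisfy the tropical
Plücker relations: given optimal matchings of the rows onto `A - j` and `B + j`, exchanging them
along the alternating path that starts at `j` yields matchings onto `A - k` and `B + k` of the
same total weight.

For multiplication by `x_i`, fix a monomial `m₀` of `f` of least `x_i`-degree. The rows of
`D_{d+1}(f)` are the rows `x_i X`, which form `D_d(f)` after shifting columns by `x_i`, and the
rows `X'` not divisible by `x_i`, which are matched with the columns `X' m₀`. Every row `x_i X`
vanishes on the columns `X' m₀` by minimality of `m₀`, so `D_{d+1}(f)` is block triangular,
and for a set `C` of columns of `D_d(f)` of size one less than the rank, the cocircuit of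
`x_i C ∪ {X' m₀}` is `x_i` times the cocircuit of `C`, scaled by the nonzero minor on the columns `X' m₀`. (If instead some column of
`C` has smaller `x_i`-degree than `m₀`, that column of `D_d(f)` is zero and the cocircuit of `C`
vanishes.) Since multiplication by `x_i` commutes with tropical linear combinations, it maps the
span of the cocircuits into the span of the cocircuits. -/

open scoped Classical

noncomputable section

local instance tropOrderBot {S : Type*} [LinearOrderedCommGroupWithZero S] :
    OrderBot S where
  bot := 0
  bot_le _ := zero_le'

variable {S : Type*} [LinearOrderedCommGroupWithZero S]

/-- A tropical sum tropically vanishes if deleting any one term leaves it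
unchanged. -/
def TropVanishes {ι : Type*} [DecidableEq ι] (T : Finset ι) (g : ι → S) : Prop :=
  ∀ j ∈ T, (T.erase j).sup g = T.sup g

/-- Tropical Plücker vector (valuated matroid) of rank `d`. -/
def IsTropPlucker {ι : Type*} [DecidableEq ι] (d : ℕ) (p : Finset ι → S) : Prop :=
  (∃ A, p A ≠ 0) ∧ (∀ A, p A ≠ 0 → A.card = d) ∧
    ∀ A B : Finset ι, A.card = d + 1 → B.card = d - 1 →
      TropVanishes (A \ B) fun i => p (A.erase i) * p (insert i B)

/-- Submodule of `S^ι`. -/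
def IsSubmodS {ι : Type*} (M : Set (ι → S)) : Prop :=
  (fun _ => 0) ∈ M ∧ (∀ v ∈ M, ∀ w ∈ M, (fun i => max (v i) (w i)) ∈ M) ∧
    ∀ c : S, ∀ v ∈ M, (fun i => c * v i) ∈ M

/-- The submodule generated by a set. -/
def spanS {ι : Type*} (G : Set (ι → S)) : Set (ι → S) :=
  ⋂₀ {M | IsSubmodS M ∧ G ⊆ M}

/-- The cocircuit of `q` associated with a set `C`. -/
def cocirc {ι : Type*} [DecidableEq ι] (q : Finset ι → S) (C : Finset ι) :
    ι → S :=
  fun i => if i ∈ C then 0 else q (insert i C)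

/-- The tropical linear space spanned by the cocircuits of a rank-`ρ` Plücker
vector. -/
def cospan {ι : Type*} [DecidableEq ι] (ρ : ℕ) (q : Finset ι → S) :
    Set (ι → S) :=
  spanS {g | ∃ C : Finset ι, C.card = ρ - 1 ∧ g = cocirc q C}

variable {n e : ℕ}

/-- The `(X, Y)` entry of the Macaulay matrix of `f`: the coefficient of the
monomial `Y` in `X·f`. -/
def macEnt (f : Multiset (Fin (n + 1)) → S) {c d : ℕ}
    (X : Sym (Fin (n + 1)) c) (Y : Sym (Fin (n + 1)) d) : S :=
  if X.toMultiset ≤ Y.toMultiset then f (Y.toMultiset - X.toMultiset) else 0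

/-- The Plücker coordinates of the stable sum of the rows of the Macaulay
matrix `D_d(f)`: tropical maximal minors, i.e. the tropical sum over all
systems of distinct representatives of the products of entries. -/
def macPlucker (f : Multiset (Fin (n + 1)) → S) (e d : ℕ)
    (B : Finset (Sym (Fin (n + 1)) d)) : S :=
  Finset.univ.sup fun φ : Sym (Fin (n + 1)) (d - e) → Sym (Fin (n + 1)) d =>
    if Function.Injective φ ∧ Finset.univ.image φ = B then
      ∏ X : Sym (Fin (n + 1)) (d - e), macEnt f X (φ X)
    else 0

/-- Multiplication by the variable `x_i`, as a map from degree-`d` vectors to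
degree-`(d+1)` vectors. -/
def mulVar (i : Fin (n + 1)) {d : ℕ} (v : Sym (Fin (n + 1)) d → S) :
    Sym (Fin (n + 1)) (d + 1) → S :=
  fun Y => Finset.univ.sup fun X : Sym (Fin (n + 1)) d =>
    if Y.toMultiset = i ::ₘ X.toMultiset then v X else 0


section Span

variable {ι κ : Type*}

theorem subset_spanS (G : Set (ι → S)) : G ⊆ spanS G :=
  fun _ hg => Set.mem_sInter.mpr fun _ hM => hM.2 hg

theorem spanS_subset {G M : Set (ι → S)} (hM : IsSubmodS M) (hG : G ⊆ M) : spanS G ⊆ M :=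
  Set.sInter_subset_of_mem ⟨hM, hG⟩

theorem isSubmodS_spanS (G : Set (ι → S)) : IsSubmodS (spanS G) := by
  simp only [spanS, IsSubmodS, Set.mem_sInter]
  exact ⟨fun M hM => hM.1.1, fun v hv w hw M hM => hM.1.2.1 v (hv M hM) w (hw M hM),
    fun c v hv M hM => hM.1.2.2 c v (hv M hM)⟩

theorem mem_spanS_of_mul_mem {G : Set (ι → S)} {v : ι → S} {μ : S} (hμ : μ ≠ 0)
    (h : (fun x => μ * v x) ∈ spanS G) : v ∈ spanS G := by
  simpa only [inv_mul_cancel_left₀ hμ] using (isSubmodS_spanS G).2.2 μ⁻¹ _ h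

theorem IsSubmodS.preimage {M : Set (κ → S)} (hM : IsSubmodS M) {T : (ι → S) → κ → S}
    (h0 : T (fun _ => 0) = fun _ => 0)
    (hmax : ∀ v w, T (fun x => max (v x) (w x)) = fun y => max (T v y) (T w y))
    (hsmul : ∀ c v, T (fun x => c * v x) = fun y => c * T v y) :
    IsSubmodS (T ⁻¹' M) := by
  refine ⟨?_, fun v hv w hw => ?_, fun c v hv => ?_⟩
  · simpa only [Set.mem_preimage, h0] using hM.1
  · simpa only [Set.mem_preimage, hmax] using hM.2.1 _ hv _ hw
  · simpa only [Set.mem_preimage, hsmul] using hM.2.2 c _ hv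

end Span

section TropMinor

variable {R R' ι : Type*} [Fintype R] [DecidableEq R] [Fintype R'] [DecidableEq R']
  [Fintype ι] [DecidableEq ι]

def tropMinor (w : R → ι → S) (B : Finset ι) : S :=
  Finset.univ.sup fun φ : R → ι =>
    if Function.Injective φ ∧ Finset.univ.image φ = B then ∏ r, w r (φ r) else 0

theorem prod_le_tropMinor (w : R → ι → S) {φ : R → ι} (hφ : Function.Injective φ) :
    ∏ r, w r (φ r) ≤ tropMinor w (Finset.univ.image φ) := by
  have h := Finset.le_sup (f := fun ψ : R → ι =>
    if Function.Injective ψ ∧ Finset.univ.image ψ = Finset.univ.image φ then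
      ∏ r, w r (ψ r) else 0) (Finset.mem_univ φ)
  rwa [if_pos ⟨hφ, rfl⟩] at h

theorem tropMinor_le_iff {w : R → ι → S} {B : Finset ι} {c : S} :
    tropMinor w B ≤ c ↔
      ∀ φ : R → ι, Function.Injective φ → Finset.univ.image φ = B → ∏ r, w r (φ r) ≤ c := by
  refine ⟨fun h φ hφ hB => ?_, fun h => ?_⟩
  · subst hB
    exact (prod_le_tropMinor w hφ).trans h
  refine Finset.sup_le fun φ _ => ?_
  split_ifs with hφ
  exacts [h φ hφ.1 hφ.2, zero_le]

theorem exists_prod_eq_tropMinor {w : R → ι → S} {B : Finset ι} (h : tropMinor w B ≠ 0) :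
    ∃ φ : R → ι, Function.Injective φ ∧ Finset.univ.image φ = B ∧
      tropMinor w B = ∏ r, w r (φ r) := by
  by_contra! hne
  refine h (le_antisymm (tropMinor_le_iff.mpr fun φ hφ hB => ?_) zero_le)
  obtain ⟨ψ, -, hψ⟩ := Finset.exists_mem_eq_sup Finset.univ ⟨φ, Finset.mem_univ φ⟩ fun ψ : R → ι =>
    if Function.Injective ψ ∧ Finset.univ.image ψ = B then ∏ r, w r (ψ r) else 0
  split_ifs at hψ with hψB
  · exact absurd hψ (hne ψ hψB.1 hψB.2)
  · exact (prod_le_tropMinor w hφ).trans (hB ▸ hψ.le)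

theorem card_eq_of_tropMinor_ne_zero {w : R → ι → S} {B : Finset ι} (h : tropMinor w B ≠ 0) :
    B.card = Fintype.card R := by
  obtain ⟨φ, hφ, rfl, -⟩ := exists_prod_eq_tropMinor h
  rw [Finset.card_image_of_injective _ hφ, Finset.card_univ]

theorem tropMinor_image_ne_zero {w : R → ι → S} {φ : R → ι} (hφ : Function.Injective φ)
    (h : ∀ r, w r (φ r) ≠ 0) : tropMinor w (Finset.univ.image φ) ≠ 0 :=
  ne_bot_of_le_ne_bot (Finset.prod_ne_zero_iff.mpr fun r _ => h r) (prod_le_tropMinor w hφ)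

theorem tropMinor_eq_zero_of_col_eq_zero {w : R → ι → S} {B : Finset ι} {y : ι} (hy : y ∈ B)
    (h0 : ∀ r, w r y = 0) : tropMinor w B = 0 := by
  refine le_antisymm (tropMinor_le_iff.mpr fun φ _ hB => ?_) zero_le
  obtain ⟨r, -, rfl⟩ := Finset.mem_image.mp (hB ▸ hy)
  exact (Finset.prod_eq_zero (Finset.mem_univ r) (h0 r)).le

theorem tropMinor_comp_equiv_le (E : R ≃ R') (w : R' → ι → S) (B : Finset ι) :
    tropMinor (fun r => w (E r)) B ≤ tropMinor w B := by
  refine tropMinor_le_iff.mpr fun φ hφ hB => ?_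
  have him : Finset.univ.image (φ ∘ E.symm) = B := by
    rw [← hB, ← Finset.image_image, Finset.image_univ_equiv]
  calc ∏ r, w (E r) (φ r) = ∏ r', w r' ((φ ∘ E.symm) r') := by rw [← E.prod_comp]; simp
    _ ≤ tropMinor w B := him ▸ prod_le_tropMinor w (hφ.comp E.symm.injective)

theorem tropMinor_comp_equiv (E : R ≃ R') (w : R' → ι → S) (B : Finset ι) :
    tropMinor (fun r => w (E r)) B = tropMinor w B :=
  le_antisymm (tropMinor_comp_equiv_le E w B) <| by
    simpa using tropMinor_comp_equiv_le E.symm (fun r => w (E r)) B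

end TropMinor

theorem prod_mul_prod_eq_of_swap {R ι M : Type*} [Fintype R] [CommMonoid M] (w : R → ι → M)
    {σ τ σ' τ' : R → ι} (h : ∀ r, (σ' r = σ r ∧ τ' r = τ r) ∨ (σ' r = τ r ∧ τ' r = σ r)) :
    (∏ r, w r (σ' r)) * ∏ r, w r (τ' r) = (∏ r, w r (σ r)) * ∏ r, w r (τ r) := by
  simp only [← Finset.prod_mul_distrib]
  refine Finset.prod_congr rfl fun r _ => ?_
  rcases h r with ⟨h₁, h₂⟩ | ⟨h₁, h₂⟩ <;> rw [h₁, h₂]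
  exact mul_comm _ _

section Matching

variable {R ι : Type*} [DecidableEq R]

theorem Set.insert_insert_diff_diff {s : Set ι} {a b x : ι} (ha : a ∈ s) (hax : a ≠ x)
    (hxb : x ≠ b) : insert a (insert b (s \ {a}) \ {x}) = insert b (s \ {x}) := by
  ext y
  simp only [Set.mem_insert_iff, Set.mem_sdiff, Set.mem_singleton_iff]
  grind

theorem range_update_of_injective {σ : R → ι} (hσ : Function.Injective σ) (r : R) (x : ι) :
    Set.range (Function.update σ r x) = insert x (Set.range σ \ {σ r}) := by
  ext y
  simp only [Set.mem_range, Set.mem_insert_iff, Set.mem_sdiff, Set.mem_singleton_iff]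
  constructor
  · rintro ⟨r', rfl⟩
    by_cases h : r' = r
    · subst h; simp
    · rw [Function.update_of_ne h]
      exact .inr ⟨⟨r', rfl⟩, fun h' => h (hσ h')⟩
  · rintro (rfl | ⟨⟨r', rfl⟩, hne⟩)
    · exact ⟨r, Function.update_self r y σ⟩
    · exact ⟨r', Function.update_of_ne (fun h => hne (by rw [h])) _ _⟩

theorem Function.Injective.update_of_notMem_range {σ : R → ι} (hσ : Function.Injective σ)
    (r : R) {x : ι} (hx : x ∉ Set.range σ) : Function.Injective (Function.update σ r x) := by
  intro a b h
  by_cases ha : a = r <;> by_cases hb : b = r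
  · rw [ha, hb]
  · rw [ha, Function.update_self, Function.update_of_ne hb] at h
    exact absurd ⟨b, h.symm⟩ hx
  · rw [hb, Function.update_self, Function.update_of_ne ha] at h
    exact absurd ⟨a, h⟩ hx
  · rw [Function.update_of_ne ha, Function.update_of_ne hb] at h
    exact hσ h

/-- Exchange of `σ` and `τ` along the alternating path of `σ ∪ τ` that starts at `i`. -/
theorem exists_swap_of_injective [Fintype R] {σ τ : R → ι} (hσ : Function.Injective σ)
    (hτ : Function.Injective τ) {i : ι} (hiσ : i ∉ Set.range σ) (hiτ : i ∈ Set.range τ) :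
    ∃ j ∈ Set.range σ, j ∉ Set.range τ ∧ ∃ σ' τ' : R → ι,
      Function.Injective σ' ∧ Function.Injective τ' ∧
      Set.range σ' = insert i (Set.range σ \ {j}) ∧
      Set.range τ' = insert j (Set.range τ \ {i}) ∧
      ∀ r, (σ' r = σ r ∧ τ' r = τ r) ∨ (σ' r = τ r ∧ τ' r = σ r) := by
  induction hN : (Finset.univ.filter fun r => σ r ≠ τ r).card using Nat.strong_induction_on
    generalizing σ i with
  | _ N ih =>
  obtain ⟨r₀, hr₀⟩ := hiτ
  obtain ⟨c, hc⟩ : ∃ c, σ r₀ = c := ⟨_, rfl⟩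
  have hci : c ≠ i := fun h => hiσ ⟨r₀, hc.trans h⟩
  have hσ₁ := hσ.update_of_notMem_range r₀ hiσ
  have hrange₁ : Set.range (Function.update σ r₀ i) = insert i (Set.range σ \ {c}) :=
    hc ▸ range_update_of_injective hσ r₀ i
  by_cases hcτ : c ∈ Set.range τ
  · -- `c` is still covered by `τ`: put `i` into the first matching at `r₀` and continue from `c`
    have hlt : (Finset.univ.filter fun r => Function.update σ r₀ i r ≠ τ r).card < N := by
      have hfilter : (Finset.univ.filter fun r => Function.update σ r₀ i r ≠ τ r) =
          (Finset.univ.filter fun r => σ r ≠ τ r).erase r₀ := by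
        ext r
        by_cases hr : r = r₀
        · subst hr; simp [hr₀]
        · simp [hr]
      rw [hfilter, ← hN]
      exact Finset.card_erase_lt_of_mem (by simp [hc, hr₀, hci])
    have hcσ₁ : c ∉ Set.range (Function.update σ r₀ i) := by simp [hrange₁, hci]
    obtain ⟨j, hjσ₁, hjτ, σ', τ', hσ', hτ', hσ'r, hτ'r, hrows⟩ := ih _ hlt hσ₁ hcσ₁ hcτ rfl
    have hji : j ≠ i := fun h => hjτ (h ▸ ⟨r₀, hr₀⟩)
    have hjc : j ≠ c := fun h => hcσ₁ (h ▸ hjσ₁)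
    have hτ'r₀ : τ' r₀ = i := by rcases hrows r₀ with h | h <;> simp [h.2, hr₀]
    have hcτ' : c ∉ Set.range τ' := by simp [hτ'r, hjc.symm]
    refine ⟨j, ?_, hjτ, σ', Function.update τ' r₀ c, hσ', hτ'.update_of_notMem_range r₀ hcτ',
      ?_, ?_, fun r => ?_⟩
    · simp only [hrange₁, Set.mem_insert_iff, hji, false_or] at hjσ₁
      exact hjσ₁.1
    · rw [hσ'r, hrange₁, Set.insert_insert_diff_diff (s := Set.range σ) ⟨r₀, hc⟩ hjc.symm hji]
    · rw [range_update_of_injective hτ', hτ'r₀, hτ'r,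
        Set.insert_insert_diff_diff hcτ hci hji.symm]
    · by_cases hr : r = r₀
      · subst hr
        rcases hrows r with h | h <;> simp_all
      · simpa [Function.update_of_ne hr] using hrows r
  · refine ⟨c, ⟨r₀, hc⟩, hcτ, Function.update σ r₀ i, Function.update τ r₀ c, hσ₁,
      hτ.update_of_notMem_range r₀ hcτ, hrange₁, by rw [range_update_of_injective hτ, hr₀],
      fun r => ?_⟩
    by_cases hr : r = r₀
    · subst hr; simp [hr₀, hc]
    · simp [hr]

end Matching

section TropPlucker

variable {R ι : Type*} [Fintype R] [DecidableEq R] [Fintype ι] [DecidableEq ι]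

theorem exists_tropMinor_mul_le (w : R → ι → S) {A B : Finset ι} {j : ι} (hjA : j ∈ A)
    (hjB : j ∉ B) (h : tropMinor w (A.erase j) * tropMinor w (insert j B) ≠ 0) :
    ∃ k ∈ A, k ∉ B ∧ k ≠ j ∧ tropMinor w (A.erase j) * tropMinor w (insert j B) ≤
      tropMinor w (A.erase k) * tropMinor w (insert k B) := by
  obtain ⟨σ, hσ, hσA, hσw⟩ := exists_prod_eq_tropMinor (left_ne_zero_of_mul h)
  obtain ⟨τ, hτ, hτB, hτw⟩ := exists_prod_eq_tropMinor (right_ne_zero_of_mul h)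
  have hσA' : Set.range σ = ↑(A.erase j) := by rw [← hσA, Fintype.coe_image_univ]
  have hτB' : Set.range τ = ↑(insert j B) := by rw [← hτB, Fintype.coe_image_univ]
  obtain ⟨k, hkσ, hkτ, σ', τ', hσ', hτ', hσ'A, hτ'B, hrows⟩ :=
    exists_swap_of_injective hσ hτ (i := j) (by simp [hσA']) (by simp [hτB'])
  rw [hσA', Finset.coe_erase, Set.mem_sdiff, Finset.mem_coe] at hkσ
  rw [hτB', Finset.coe_insert, Set.mem_insert_iff, Finset.mem_coe, not_or] at hkτ
  have hσ'A' : Finset.univ.image σ' = A.erase k := by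
    rw [← Finset.coe_inj, Fintype.coe_image_univ, hσ'A, hσA']
    ext x
    simp only [Finset.coe_erase, Set.mem_insert_iff, Set.mem_sdiff, Finset.mem_coe,
      Set.mem_singleton_iff]
    grind
  have hτ'B' : Finset.univ.image τ' = insert k B := by
    rw [← Finset.coe_inj, Fintype.coe_image_univ, hτ'B, hτB']
    ext x
    simp only [Finset.coe_insert, Set.mem_insert_iff, Set.mem_sdiff, Finset.mem_coe,
      Set.mem_singleton_iff]
    grind
  refine ⟨k, hkσ.1, hkτ.2, hkσ.2, ?_⟩
  rw [hσw, hτw, ← prod_mul_prod_eq_of_swap w hrows, ← hσ'A', ← hτ'B']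
  exact mul_le_mul' (prod_le_tropMinor w hσ') (prod_le_tropMinor w hτ')

theorem tropVanishes_tropMinor (w : R → ι → S) (A B : Finset ι) :
    TropVanishes (A \ B) fun c => tropMinor w (A.erase c) * tropMinor w (insert c B) := by
  intro j hj
  refine le_antisymm (Finset.sup_mono (Finset.erase_subset _ _)) (Finset.sup_le fun c hc => ?_)
  by_cases hcj : c = j
  · subst hcj
    by_cases h0 : tropMinor w (A.erase c) * tropMinor w (insert c B) = 0
    · exact h0 ▸ zero_le
    obtain ⟨k, hkA, hkB, hkc, hle⟩ :=
      exists_tropMinor_mul_le w (Finset.mem_sdiff.mp hj).1 (Finset.mem_sdiff.mp hj).2 h0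
    exact Finset.le_sup_of_le (Finset.mem_erase.mpr ⟨hkc, Finset.mem_sdiff.mpr ⟨hkA, hkB⟩⟩) hle
  · exact Finset.le_sup_of_le (Finset.mem_erase.mpr ⟨hcj, hc⟩) le_rfl

theorem isTropPlucker_tropMinor {w : R → ι → S} (h : ∃ B, tropMinor w B ≠ 0) :
    IsTropPlucker (Fintype.card R) (tropMinor w) :=
  ⟨h, fun _ => card_eq_of_tropMinor_ne_zero, fun A B _ _ => tropVanishes_tropMinor w A B⟩

end TropPlucker

section TropMinorBlocks

variable {R R₀ ι : Type*} [Fintype R] [Fintype R₀] [DecidableEq ι]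

theorem image_univ_sum (φ : R ⊕ R₀ → ι) :
    Finset.univ.image φ =
      Finset.univ.image (fun r => φ (.inl r)) ∪ Finset.univ.image (fun r => φ (.inr r)) := by
  ext x
  simp [Sum.exists]

theorem disjoint_image_inl_image_inr {φ : R ⊕ R₀ → ι} (hφ : Function.Injective φ) :
    Disjoint (Finset.univ.image fun r => φ (.inl r)) (Finset.univ.image fun r => φ (.inr r)) :=
  Finset.disjoint_left.mpr fun _ h₁ h₂ => by
    obtain ⟨r, -, rfl⟩ := Finset.mem_image.mp h₁
    obtain ⟨r₀, -, hr₀⟩ := Finset.mem_image.mp h₂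
    exact Sum.inr_ne_inl (hφ hr₀)

theorem image_inl_eq_of_prod_ne_zero {w : R ⊕ R₀ → ι → S} {E D : Finset ι} (hED : Disjoint E D)
    (hE : E.card = Fintype.card R) (hvan : ∀ r, ∀ z ∈ D, w (.inl r) z = 0) {φ : R ⊕ R₀ → ι}
    (hφ : Function.Injective φ) (hB : Finset.univ.image φ = E ∪ D) (hz : ∏ p, w p (φ p) ≠ 0) :
    Finset.univ.image (fun r => φ (.inl r)) = E ∧ Finset.univ.image (fun r => φ (.inr r)) = D := by
  have hφl : Function.Injective fun r => φ (.inl r) := hφ.comp Sum.inl_injective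
  have hinl : Finset.univ.image (fun r => φ (.inl r)) = E := by
    refine Finset.eq_of_subset_of_card_le (fun z hz' => ?_) ?_
    · obtain ⟨r, -, rfl⟩ := Finset.mem_image.mp hz'
      have hmem : φ (.inl r) ∈ E ∪ D := hB ▸ Finset.mem_image_of_mem φ (Finset.mem_univ _)
      exact (Finset.mem_union.mp hmem).resolve_right
        fun hD => Finset.prod_ne_zero_iff.mp hz _ (Finset.mem_univ _) (hvan r _ hD)
    · rw [hE, Finset.card_image_of_injective _ hφl, Finset.card_univ]
  refine ⟨hinl, ?_⟩
  have hunion := image_univ_sum φ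
  rw [hB, hinl] at hunion
  rw [← Finset.union_sdiff_cancel_left hED, hunion,
    Finset.union_sdiff_cancel_left (hinl ▸ disjoint_image_inl_image_inr hφ)]

variable [DecidableEq R] [DecidableEq R₀] [Fintype ι]

/-- Laplace expansion of a block-triangular tropical minor. -/
theorem tropMinor_union_eq_mul (w : R ⊕ R₀ → ι → S) {E D : Finset ι} (hED : Disjoint E D)
    (hE : E.card = Fintype.card R) (hvan : ∀ r, ∀ z ∈ D, w (.inl r) z = 0) :
    tropMinor w (E ∪ D) =
      tropMinor (fun r => w (.inl r)) E * tropMinor (fun r => w (.inr r)) D := by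
  refine le_antisymm (tropMinor_le_iff.mpr fun φ hφ hB => ?_) ?_
  · by_cases hz : ∏ p, w p (φ p) = 0
    · exact hz ▸ zero_le
    obtain ⟨hinl, hinr⟩ := image_inl_eq_of_prod_ne_zero hED hE hvan hφ hB hz
    rw [Fintype.prod_sum_type]
    exact mul_le_mul' (hinl ▸ prod_le_tropMinor _ (hφ.comp Sum.inl_injective))
      (hinr ▸ prod_le_tropMinor _ (hφ.comp Sum.inr_injective))
  · by_cases hz : tropMinor (fun r => w (.inl r)) E * tropMinor (fun r => w (.inr r)) D = 0
    · exact hz ▸ zero_le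
    obtain ⟨φ₁, hφ₁, rfl, h₁⟩ := exists_prod_eq_tropMinor (left_ne_zero_of_mul hz)
    obtain ⟨φ₀, hφ₀, rfl, h₀⟩ := exists_prod_eq_tropMinor (right_ne_zero_of_mul hz)
    have hφ : Function.Injective (Sum.elim φ₁ φ₀) := hφ₁.sumElim hφ₀ fun r r₀ h =>
      Finset.disjoint_left.mp hED (Finset.mem_image_of_mem _ (Finset.mem_univ r))
        (h ▸ Finset.mem_image_of_mem _ (Finset.mem_univ r₀))
    have h := prod_le_tropMinor w hφ
    simp only [image_univ_sum, Fintype.prod_sum_type, Sum.elim_inl, Sum.elim_inr] at h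
    rw [h₁, h₀]
    exact h

/-- Hall's condition fails for the rows `P`. -/
theorem tropMinor_eq_zero_of_card_lt (w : R → ι → S) {B : Finset ι} (P : Finset R)
    (G : Finset ι) (hG : G.card < P.card) (hvan : ∀ r ∈ P, ∀ z ∈ B, z ∉ G → w r z = 0) :
    tropMinor w B = 0 := by
  refine le_antisymm (tropMinor_le_iff.mpr fun φ hφ hB => ?_) zero_le
  by_cases hPG : Set.MapsTo φ P G
  · exact absurd (Finset.card_le_card_of_injOn φ hPG hφ.injOn) hG.not_ge
  · simp only [Set.MapsTo, not_forall] at hPG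
    obtain ⟨r, hr, hrG⟩ := hPG
    have hrB : φ r ∈ B := hB ▸ Finset.mem_image_of_mem φ (Finset.mem_univ r)
    exact (Finset.prod_eq_zero (Finset.mem_univ r) (hvan r hr _ hrB hrG)).le

variable {κ : Type*} [Fintype κ] [DecidableEq κ]

theorem tropMinor_comp_embedding (w : R → ι → S) {j : κ → ι} (hj : Function.Injective j)
    (B : Finset κ) : tropMinor (fun r y => w r (j y)) B = tropMinor w (B.image j) := by
  refine le_antisymm (tropMinor_le_iff.mpr fun φ hφ hB => ?_)
    (tropMinor_le_iff.mpr fun ψ hψ hB => ?_)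
  · have h := prod_le_tropMinor w (hj.comp hφ)
    rwa [← Finset.image_image, hB] at h
  · have hψj : ∀ r, ∃ y, j y = ψ r := fun r => by
      obtain ⟨y, -, hy⟩ :=
        Finset.mem_image.mp (hB ▸ Finset.mem_image_of_mem ψ (Finset.mem_univ r))
      exact ⟨y, hy⟩
    choose φ hφ using hψj
    obtain rfl : ψ = j ∘ φ := funext fun r => (hφ r).symm
    rw [← Finset.image_image] at hB
    have h := prod_le_tropMinor (fun r y => w r (j y)) (Function.Injective.of_comp hψ)
    rwa [Finset.image_injective hj hB] at h

end TropMinorBlocks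

section SymMonomials

variable {α : Type*} {a b : ℕ}

def Sym.addMultiset (m : Multiset α) (h : a + Multiset.card m = b) (X : Sym α a) : Sym α b :=
  ⟨X + m, by rw [Multiset.card_add, X.card_coe, h]⟩

theorem Sym.coe_addMultiset (m : Multiset α) (h : a + Multiset.card m = b) (X : Sym α a) :
    (X.addMultiset m h : Multiset α) = X + m :=
  rfl

theorem Sym.addMultiset_injective (m : Multiset α) (h : a + Multiset.card m = b) :
    Function.Injective (Sym.addMultiset m h) :=
  fun _ _ hXY => Sym.coe_injective (add_right_cancel (congrArg Sym.toMultiset hXY))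

theorem Sym.cons_injective (i : α) : Function.Injective (Sym.cons i : Sym α a → Sym α (a + 1)) :=
  fun X Y h => (Sym.cons_inj_right i X Y).mp h

variable [DecidableEq α]

def Sym.consEquiv (i : α) : Sym α a ≃ {X : Sym α (a + 1) // i ∈ X} where
  toFun X := ⟨i ::ₛ X, Sym.mem_cons_self i X⟩
  invFun X := X.1.erase i X.2
  left_inv X := Sym.erase_cons_head X i
  right_inv X := Subtype.ext (Sym.cons_erase X.2)

def Sym.consSumEquiv (i : α) : Sym α a ⊕ {X : Sym α (a + 1) // i ∉ X} ≃ Sym α (a + 1) :=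
  ((Sym.consEquiv i).sumCongr (Equiv.refl _)).trans (Equiv.sumCompl _)

end SymMonomials

section Macaulay

variable (f : Multiset (Fin (n + 1)) → S)

/-- `D_d(f)` is `macaulayMatrix f (d - e) d`. The row degree is a free parameter so that the
step from `D_d(f)` to `D_{d+1}(f)` is from rows of degree `a` to rows of degree `a + 1`, with no
truncated subtraction `d + 1 - e` involved. -/
abbrev macaulayMatrix (a b : ℕ) : Sym (Fin (n + 1)) a → Sym (Fin (n + 1)) b → S :=
  macEnt f

theorem macPlucker_eq_tropMinor (e d : ℕ) :
    macPlucker f e d = tropMinor (macaulayMatrix f (d - e) d) :=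
  rfl

theorem card_sym_fin (n k : ℕ) : Fintype.card (Sym (Fin (n + 1)) k) = (n + k).choose k := by
  rw [Sym.card_sym_eq_choose, Fintype.card_fin]
  congr 1
  omega

variable {a b : ℕ}

theorem macEnt_addMultiset {m : Multiset (Fin (n + 1))} (h : a + Multiset.card m = b)
    (X : Sym (Fin (n + 1)) a) : macEnt f X (X.addMultiset m h) = f m := by
  rw [macEnt, Sym.coe_addMultiset, if_pos le_self_add, add_tsub_cancel_left]

theorem macEnt_cons_cons (i : Fin (n + 1)) (X : Sym (Fin (n + 1)) a) (Y : Sym (Fin (n + 1)) b) :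
    macEnt f (i ::ₛ X) (i ::ₛ Y) = macEnt f X Y := by
  simp only [macEnt, Sym.coe_cons, Multiset.cons_le_cons_iff, Multiset.sub_cons,
    Multiset.erase_cons_head]

theorem macEnt_eq_zero_of_count_lt {i : Fin (n + 1)} {k : ℕ}
    (hk : ∀ m, f m ≠ 0 → k ≤ Multiset.count i m) {X : Sym (Fin (n + 1)) a}
    {Y : Sym (Fin (n + 1)) b} (h : Multiset.count i Y < Multiset.count i X + k) :
    macEnt f X Y = 0 := by
  rw [macEnt]
  split_ifs with hXY
  · by_contra hne
    have := hk _ hne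
    rw [Multiset.count_sub] at this
    have := Multiset.count_le_of_le i hXY
    omega
  · rfl

theorem isTropPlucker_macaulay {m : Multiset (Fin (n + 1))} (hm : f m ≠ 0)
    (h : a + Multiset.card m = b) :
    IsTropPlucker (Fintype.card (Sym (Fin (n + 1)) a)) (tropMinor (macaulayMatrix f a b)) :=
  isTropPlucker_tropMinor ⟨_, tropMinor_image_ne_zero (Sym.addMultiset_injective m h)
    fun X => (macEnt_addMultiset f h X).trans_ne hm⟩

end Macaulay

section Cocircuit

variable {R ι : Type*} [Fintype R] [DecidableEq R] [Fintype ι] [DecidableEq ι]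

theorem cocirc_tropMinor_apply_eq_zero {w : R → ι → S} (C : Finset ι) {y : ι}
    (h0 : ∀ r, w r y = 0) : cocirc (tropMinor w) C y = 0 := by
  rw [cocirc]
  split_ifs
  · rfl
  · exact tropMinor_eq_zero_of_col_eq_zero (Finset.mem_insert_self y C) h0

theorem cocirc_tropMinor_eq_zero_of_mem {w : R → ι → S} {C : Finset ι} {c : ι} (hc : c ∈ C)
    (h0 : ∀ r, w r c = 0) : cocirc (tropMinor w) C = fun _ => 0 := by
  funext y
  rw [cocirc]
  split_ifs
  · rfl
  · exact tropMinor_eq_zero_of_col_eq_zero (Finset.mem_insert_of_mem hc) h0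

end Cocircuit

section MulVar

variable {d : ℕ}

theorem mulVar_cons (i : Fin (n + 1)) (v : Sym (Fin (n + 1)) d → S) (Y : Sym (Fin (n + 1)) d) :
    mulVar i v (i ::ₛ Y) = v Y := by
  refine le_antisymm (Finset.sup_le fun X _ => ?_) ?_
  · split_ifs with hX
    · rw [Sym.coe_cons, Multiset.cons_inj_right, Sym.coe_inj] at hX
      rw [hX]
    · exact zero_le
  · exact Finset.le_sup_of_le (Finset.mem_univ Y) (by rw [if_pos (Sym.coe_cons Y i)])

theorem mulVar_of_notMem {i : Fin (n + 1)} (v : Sym (Fin (n + 1)) d → S)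
    {Z : Sym (Fin (n + 1)) (d + 1)} (h : i ∉ Z) : mulVar i v Z = 0 :=
  le_antisymm (Finset.sup_le fun X _ => by
    rw [if_neg fun hX => h (by rw [← Sym.mem_coe, hX]; exact Multiset.mem_cons_self i _)]) zero_le

theorem isSubmodS_preimage_mulVar (i : Fin (n + 1)) {M : Set (Sym (Fin (n + 1)) (d + 1) → S)}
    (hM : IsSubmodS M) : IsSubmodS (mulVar i ⁻¹' M) := by
  have hpointwise : ∀ (F : S → S → S) (hF : F 0 0 = 0) (v w : Sym (Fin (n + 1)) d → S),
      mulVar i (fun Y => F (v Y) (w Y)) = fun Z => F (mulVar i v Z) (mulVar i w Z) := by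
    intro F hF v w
    funext Z
    by_cases hZ : i ∈ Z
    · obtain ⟨Y, rfl⟩ := Sym.exists_cons_of_mem hZ
      simp only [mulVar_cons]
    · simp only [mulVar_of_notMem _ hZ, hF]
  refine hM.preimage ?_ (hpointwise max (max_self 0)) fun c v => ?_
  · simpa using hpointwise (fun _ _ => 0) rfl (fun _ => 0) (fun _ => 0)
  · simpa using hpointwise (fun x _ => c * x) (mul_zero c) v v

end MulVar

section ShiftedColumns

variable {a b : ℕ}

def shiftedCols (i : Fin (n + 1)) (m₀ : Multiset (Fin (n + 1)))
    (h : a + 1 + Multiset.card m₀ = b + 1) : Finset (Sym (Fin (n + 1)) (b + 1)) :=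
  Finset.univ.image fun X : {X : Sym (Fin (n + 1)) (a + 1) // i ∉ X} => X.1.addMultiset m₀ h

theorem injective_addMultiset_val (i : Fin (n + 1)) {m₀ : Multiset (Fin (n + 1))}
    (hab : a + 1 + Multiset.card m₀ = b + 1) :
    Function.Injective fun X : {X : Sym (Fin (n + 1)) (a + 1) // i ∉ X} =>
      X.1.addMultiset m₀ hab :=
  (Sym.addMultiset_injective m₀ hab).comp Subtype.val_injective

variable {i : Fin (n + 1)} {m₀ : Multiset (Fin (n + 1))} {hab : a + 1 + Multiset.card m₀ = b + 1}

theorem count_eq_of_mem_shiftedCols {z : Sym (Fin (n + 1)) (b + 1)}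
    (hz : z ∈ shiftedCols i m₀ hab) : Multiset.count i z = Multiset.count i m₀ := by
  obtain ⟨X, -, rfl⟩ := Finset.mem_image.mp hz
  rw [Sym.coe_addMultiset, Multiset.count_add, Multiset.count_eq_zero.mpr (by simpa using X.2),
    zero_add]

theorem card_shiftedCols :
    (shiftedCols i m₀ hab).card = Fintype.card {X : Sym (Fin (n + 1)) (a + 1) // i ∉ X} := by
  rw [shiftedCols, Finset.card_image_of_injective _ (injective_addMultiset_val i hab),
    Finset.card_univ]

variable (f : Multiset (Fin (n + 1)) → S)

theorem tropMinor_shiftedCols_ne_zero (hm₀ : f m₀ ≠ 0) :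
    tropMinor (fun X : {X : Sym (Fin (n + 1)) (a + 1) // i ∉ X} => macEnt f X.1)
      (shiftedCols i m₀ hab) ≠ 0 :=
  tropMinor_image_ne_zero (injective_addMultiset_val i hab)
    fun X => (macEnt_addMultiset f hab X.1).trans_ne hm₀

theorem macEnt_cons_eq_zero_of_mem_shiftedCols
    (hmin : ∀ m, f m ≠ 0 → Multiset.count i m₀ ≤ Multiset.count i m) (X : Sym (Fin (n + 1)) a)
    {z : Sym (Fin (n + 1)) (b + 1)} (hz : z ∈ shiftedCols i m₀ hab) : macEnt f (i ::ₛ X) z = 0 :=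
  macEnt_eq_zero_of_count_lt f hmin (by
    rw [count_eq_of_mem_shiftedCols hz, Sym.coe_cons, Multiset.count_cons_self]
    omega)

end ShiftedColumns

section MulVarMacaulay

variable (f : Multiset (Fin (n + 1)) → S) {i : Fin (n + 1)} {a b : ℕ} {m₀ : Multiset (Fin (n + 1))}

theorem tropMinor_macaulay_union_shiftedCols {hab : a + 1 + Multiset.card m₀ = b + 1}
    (hmin : ∀ m, f m ≠ 0 → Multiset.count i m₀ ≤ Multiset.count i m)
    {B : Finset (Sym (Fin (n + 1)) b)} (hB : B.card = Fintype.card (Sym (Fin (n + 1)) a))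
    (hBD : Disjoint (B.image (Sym.cons i)) (shiftedCols i m₀ hab)) :
    tropMinor (macaulayMatrix f (a + 1) (b + 1)) (B.image (Sym.cons i) ∪ shiftedCols i m₀ hab) =
      tropMinor (macaulayMatrix f a b) B *
        tropMinor (fun X : {X : Sym (Fin (n + 1)) (a + 1) // i ∉ X} => macEnt f X.1)
          (shiftedCols i m₀ hab) := by
  rw [← tropMinor_comp_equiv (Sym.consSumEquiv i),
    tropMinor_union_eq_mul _ hBD
      (by rw [Finset.card_image_of_injective _ (Sym.cons_injective i), hB])
      (fun X _ hz => macEnt_cons_eq_zero_of_mem_shiftedCols f hmin X hz),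
    ← tropMinor_comp_embedding _ (Sym.cons_injective i)]
  simp [Sym.consSumEquiv, Sym.consEquiv, macEnt_cons_cons]

theorem tropMinor_macaulay_eq_zero_of_notMem {hab : a + 1 + Multiset.card m₀ = b + 1}
    (hmin : ∀ m, f m ≠ 0 → Multiset.count i m₀ ≤ Multiset.count i m)
    {C : Finset (Sym (Fin (n + 1)) b)} (hC : C.card < Fintype.card (Sym (Fin (n + 1)) a))
    {Z : Sym (Fin (n + 1)) (b + 1)} (hZ : i ∉ Z) :
    tropMinor (macaulayMatrix f (a + 1) (b + 1))
      (insert Z (C.image (Sym.cons i) ∪ shiftedCols i m₀ hab)) = 0 := by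
  refine tropMinor_eq_zero_of_card_lt _ (Finset.univ.image (Sym.cons i)) (C.image (Sym.cons i))
    ?_ fun r hr z hz hzC => ?_
  · rwa [Finset.card_image_of_injective _ (Sym.cons_injective i),
      Finset.card_image_of_injective _ (Sym.cons_injective i), Finset.card_univ]
  obtain ⟨X, -, rfl⟩ := Finset.mem_image.mp hr
  rcases Finset.mem_insert.mp hz with rfl | hz
  · refine macEnt_eq_zero_of_count_lt f hmin ?_
    rw [Multiset.count_eq_zero.mpr (by simpa using hZ), Sym.coe_cons, Multiset.count_cons_self]
    omega
  · exact macEnt_cons_eq_zero_of_mem_shiftedCols f hmin X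
      ((Finset.mem_union.mp hz).resolve_left hzC)

theorem mulVar_cocirc_apply_eq_zero {hab : a + 1 + Multiset.card m₀ = b + 1}
    (hmin : ∀ m, f m ≠ 0 → Multiset.count i m₀ ≤ Multiset.count i m)
    (C : Finset (Sym (Fin (n + 1)) b)) {Z : Sym (Fin (n + 1)) (b + 1)}
    (hZ : Z ∈ C.image (Sym.cons i) ∪ shiftedCols i m₀ hab) :
    mulVar i (cocirc (tropMinor (macaulayMatrix f a b)) C) Z = 0 := by
  rcases Finset.mem_union.mp hZ with hZ | hZ
  · obtain ⟨c, hc, rfl⟩ := Finset.mem_image.mp hZ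
    rw [mulVar_cons, cocirc, if_pos hc]
  by_cases hiZ : i ∈ Z
  · obtain ⟨Y, rfl⟩ := Sym.exists_cons_of_mem hiZ
    have hY := count_eq_of_mem_shiftedCols hZ
    rw [Sym.coe_cons, Multiset.count_cons_self] at hY
    rw [mulVar_cons]
    exact cocirc_tropMinor_apply_eq_zero C fun X => macEnt_eq_zero_of_count_lt f hmin (by omega)
  · exact mulVar_of_notMem _ hiZ

theorem cocirc_macaulay_union_shiftedCols {hab : a + 1 + Multiset.card m₀ = b + 1}
    (hmin : ∀ m, f m ≠ 0 → Multiset.count i m₀ ≤ Multiset.count i m)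
    {C : Finset (Sym (Fin (n + 1)) b)} (hC : C.card + 1 = Fintype.card (Sym (Fin (n + 1)) a))
    (hCD : Disjoint (C.image (Sym.cons i)) (shiftedCols i m₀ hab)) :
    cocirc (tropMinor (macaulayMatrix f (a + 1) (b + 1)))
        (C.image (Sym.cons i) ∪ shiftedCols i m₀ hab) = fun Z =>
      tropMinor (fun X : {X : Sym (Fin (n + 1)) (a + 1) // i ∉ X} => macEnt f X.1)
          (shiftedCols i m₀ hab) * mulVar i (cocirc (tropMinor (macaulayMatrix f a b)) C) Z := by
  funext Z
  by_cases hZ : Z ∈ C.image (Sym.cons i) ∪ shiftedCols i m₀ hab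
  · rw [cocirc, if_pos hZ, mulVar_cocirc_apply_eq_zero f hmin C hZ, mul_zero]
  rw [cocirc, if_neg hZ]
  by_cases hiZ : i ∈ Z
  · obtain ⟨Y, rfl⟩ := Sym.exists_cons_of_mem hiZ
    have hYC : Y ∉ C := fun hY => hZ (Finset.mem_union_left _ (Finset.mem_image_of_mem _ hY))
    have hYD : Disjoint ((insert Y C).image (Sym.cons i)) (shiftedCols i m₀ hab) := by
      rw [Finset.image_insert, Finset.disjoint_insert_left]
      exact ⟨fun hD => hZ (Finset.mem_union_right _ hD), hCD⟩
    rw [mulVar_cons, cocirc, if_neg hYC, ← Finset.insert_union, ← Finset.image_insert,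
      tropMinor_macaulay_union_shiftedCols f hmin (by rw [Finset.card_insert_of_notMem hYC, hC])
        hYD, mul_comm]
  · rw [mulVar_of_notMem _ hiZ, mul_zero]
    exact tropMinor_macaulay_eq_zero_of_notMem f hmin (by omega) hiZ


theorem mulVar_cocirc_mem_cospan (hm₀ : f m₀ ≠ 0) (hab : a + 1 + Multiset.card m₀ = b + 1)
    (hmin : ∀ m, f m ≠ 0 → Multiset.count i m₀ ≤ Multiset.count i m)
    {C : Finset (Sym (Fin (n + 1)) b)} (hC : C.card = Fintype.card (Sym (Fin (n + 1)) a) - 1) :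
    mulVar i (cocirc (tropMinor (macaulayMatrix f a b)) C) ∈
      cospan (Fintype.card (Sym (Fin (n + 1)) (a + 1)))
        (tropMinor (macaulayMatrix f (a + 1) (b + 1))) := by
  have hpos : 0 < Fintype.card (Sym (Fin (n + 1)) a) := Fintype.card_pos
  by_cases hdead : ∃ c ∈ C, Multiset.count i c < Multiset.count i m₀
  · obtain ⟨c, hc, hlt⟩ := hdead
    rw [cocirc_tropMinor_eq_zero_of_mem hc fun X => macEnt_eq_zero_of_count_lt f hmin (by omega)]
    exact (isSubmodS_preimage_mulVar i (isSubmodS_spanS _)).1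
  push Not at hdead
  have hCD : Disjoint (C.image (Sym.cons i)) (shiftedCols i m₀ hab) := by
    refine Finset.disjoint_left.mpr fun z hz hzD => ?_
    obtain ⟨c, hc, rfl⟩ := Finset.mem_image.mp hz
    have hcount := count_eq_of_mem_shiftedCols hzD
    rw [Sym.coe_cons, Multiset.count_cons_self] at hcount
    have := hdead c hc
    omega
  have hcard : (C.image (Sym.cons i) ∪ shiftedCols i m₀ hab).card =
      Fintype.card (Sym (Fin (n + 1)) (a + 1)) - 1 := by
    rw [Finset.card_union_of_disjoint hCD, Finset.card_image_of_injective _ (Sym.cons_injective i),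
      hC, card_shiftedCols, ← Fintype.card_congr (Sym.consSumEquiv i), Fintype.card_sum]
    omega
  refine mem_spanS_of_mul_mem (tropMinor_shiftedCols_ne_zero f (i := i) (hab := hab) hm₀) ?_
  rw [← cocirc_macaulay_union_shiftedCols f hmin (by omega) hCD]
  exact subset_spanS _ ⟨_, hcard, rfl⟩

theorem mulVar_mem_cospan_macaulay (hm₀ : f m₀ ≠ 0) (hab : a + 1 + Multiset.card m₀ = b + 1)
    (hmin : ∀ m, f m ≠ 0 → Multiset.count i m₀ ≤ Multiset.count i m)
    {v : Sym (Fin (n + 1)) b → S}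
    (hv : v ∈ cospan (Fintype.card (Sym (Fin (n + 1)) a)) (tropMinor (macaulayMatrix f a b))) :
    mulVar i v ∈ cospan (Fintype.card (Sym (Fin (n + 1)) (a + 1)))
      (tropMinor (macaulayMatrix f (a + 1) (b + 1))) :=
  spanS_subset (isSubmodS_preimage_mulVar i (isSubmodS_spanS _))
    (by rintro _ ⟨C, hC, rfl⟩; exact mulVar_cocirc_mem_cospan f hm₀ hab hmin hC) hv

end MulVarMacaulay

theorem exists_min_count {α : Type*} [DecidableEq α] {f : Multiset α → S} (hf : ∃ m, f m ≠ 0)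
    (i : α) : ∃ m₀, f m₀ ≠ 0 ∧ ∀ m, f m ≠ 0 → Multiset.count i m₀ ≤ Multiset.count i m := by
  obtain ⟨m₀, hm₀, hmin⟩ := (measure (Multiset.count i)).wf.has_min {m | f m ≠ 0} hf
  exact ⟨m₀, hm₀, fun m hm => not_lt.mp (hmin m hm)⟩

theorem macaulay_ideal_is_tropical_ideal
    (f : Multiset (Fin (n + 1)) → S)
    (hfsupp : ∀ m, f m ≠ 0 → Multiset.card m = e)
    (hf0 : ∃ m, f m ≠ 0) :
    ∀ d, e ≤ d →
      IsTropPlucker (Nat.choose (n + (d - e)) (d - e)) (macPlucker f e d) ∧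
      ∀ v ∈ cospan (Nat.choose (n + (d - e)) (d - e)) (macPlucker f e d),
        ∀ i : Fin (n + 1),
          mulVar i v ∈
            cospan (Nat.choose (n + (d + 1 - e)) (d + 1 - e))
              (macPlucker f e (d + 1)) := by
  intro d hd
  rw [← card_sym_fin, ← card_sym_fin, macPlucker_eq_tropMinor, macPlucker_eq_tropMinor,
    show d + 1 - e = d - e + 1 by omega]
  refine ⟨?_, fun v hv i => ?_⟩
  · obtain ⟨m, hm⟩ := hf0
    exact isTropPlucker_macaulay f hm (by rw [hfsupp m hm]; omega)
  obtain ⟨m₀, hm₀, hmin⟩ := exists_min_count hf0 i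
  exact mulVar_mem_cospan_macaulay f hm₀ (by rw [hfsupp m₀ hm₀]; omega) hmin hv

end
end
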